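/- Let φ : R → Q be an injective ring epimorphism with Q flat as a left R-module, K = Q/φ(R). Then a right R-module M is both torsion (M ⊗_R Q = 0) and h-divisible (a homomorphic image of a direct sum of copies of Q) if and only if M is generated by K, i.e., M is a homomorphic image of a direct sum of copies of K. -/

import Mathlib

open MulOpposite

universe u

/-- `φ : R →+* Q` is an epimorphism in the category of rings. -/
def IsRingEpi {R Q : Type u} [Ring R] [Ring Q] (φ : R →+* Q) : Prop :=
  ∀ (T : Type u) [Ring T] (ψ ω : Q →+* T), ψ.comp φ = ω.comp φ → ψ = ω

section NCTensor

variable (R : Type u) [Ring R] (M : Type u) [AddCommGroup M] [Module Rᵐᵒᵖ M]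
  (N : Type u) [AddCommGroup N] [Module R N]

/-- Relations defining the tensor product `M ⊗_R N` of a right `R`-module `M`
and a left `R`-module `N` over a (possibly noncommutative) ring `R`. -/
def ncRels : AddSubgroup (FreeAbelianGroup (M × N)) :=
  AddSubgroup.closure
    ({x | ∃ m m' n, x = FreeAbelianGroup.of (m + m', n) - FreeAbelianGroup.of (m, n) -
        FreeAbelianGroup.of (m', n)} ∪
     {x | ∃ m n n', x = FreeAbelianGroup.of (m, n + n') - FreeAbelianGroup.of (m, n) -
        FreeAbelianGroup.of (m, n')} ∪
     {x | ∃ (r : R) (m : M) (n : N), x = FreeAbelianGroup.of (op r • m, n) -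
        FreeAbelianGroup.of (m, r • n)})

/-- The tensor product `M ⊗_R N` of a right `R`-module and a left `R`-module over a
(possibly noncommutative) ring `R`, as an abelian group. -/
def NCTensor : Type u := FreeAbelianGroup (M × N) ⧸ ncRels R M N

instance : AddCommGroup (NCTensor R M N) :=
  QuotientAddGroup.Quotient.addCommGroup _

/-- The pure tensor `m ⊗ n` in `M ⊗_R N`. -/
def NCTensor.tmul (m : M) (n : N) : NCTensor R M N :=
  QuotientAddGroup.mk (FreeAbelianGroup.of (m, n))

end NCTensor

/-- A left `R`-module `N` is flat if tensoring right `R`-modules with `N`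
preserves injectivity. -/
def IsFlatLeftModule (R : Type u) [Ring R] (N : Type u) [AddCommGroup N] [Module R N] : Prop :=
  ∀ (A B : Type u) [AddCommGroup A] [AddCommGroup B] [Module Rᵐᵒᵖ A] [Module Rᵐᵒᵖ B]
    (i : A →ₗ[Rᵐᵒᵖ] B), Function.Injective i →
    ∀ g : NCTensor R A N →+ NCTensor R B N,
      (∀ a n, g (NCTensor.tmul R A N a n) = NCTensor.tmul R B N (i a) n) →
      Function.Injective g

section Kmod

variable {R Q : Type u} [Ring R] [Ring Q] (φ : R →+* Q) [Module Rᵐᵒᵖ Q]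
  (hr : ∀ (r : R) (q : Q), op r • q = q * φ r)

/-- The image of `φ`, as a submodule of the right `R`-module `Q`. -/
def phiRange : Submodule Rᵐᵒᵖ Q where
  carrier := Set.range φ
  add_mem' := by rintro x y ⟨a, rfl⟩ ⟨b, rfl⟩; exact ⟨a + b, map_add φ a b⟩
  zero_mem' := ⟨0, map_zero φ⟩
  smul_mem' := by
    rintro c x ⟨a, rfl⟩
    refine ⟨a * c.unop, ?_⟩
    rw [map_mul]
    conv_rhs => rw [← MulOpposite.op_unop c, hr]

/-- `K = Q/φ(R)` as a right `R`-module. -/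
abbrev Kmod := Q ⧸ phiRange φ hr

end Kmod

/-!
Because `φ` is an epimorphism, `a ⊗ 1 = 1 ⊗ a` in `Q ⊗_R Q`: the unit `1 + ε (1 ⊗ 1)` of the
trivial square-zero extension `Q ⊕ ε (Q ⊗_R Q)` commutes with `φ(R)`, so conjugation by it
fixes `φ(R)`, hence fixes `Q`. So
`K ⊗_R Q = 0`, and every quotient of a direct sum of copies of `K` is torsion; it is h-divisible
because `K` is a quotient of `Q`.

Conversely, let `g : Q^(I) → M` be onto with `M ⊗_R Q = 0`. By right exactness, `Q^(I) ⊗_R Q`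
is generated by the tensors `x ⊗ q` with `g x = 0`, and for such `x` the map `q ↦ g (x q)`
vanishes on `φ(R)`, so it factors through `K`. Applying `v ⊗ q ↦ g (v q)` to `v ⊗ 1` shows that
`g v` lies in the sum of the images of the maps `K → M`.
-/

namespace NCTensor

section Basic

variable {R M N A : Type u} [Ring R] [AddCommGroup M] [Module Rᵐᵒᵖ M]
  [AddCommGroup N] [Module R N] [AddCommGroup A]

def lift (b : M → N → A)
    (add_left : ∀ m m' n, b (m + m') n = b m n + b m' n)
    (add_right : ∀ m n n', b m (n + n') = b m n + b m n')
    (smul : ∀ (r : R) m n, b (op r • m) n = b m (r • n)) :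
    NCTensor R M N →+ A :=
  QuotientAddGroup.lift (ncRels R M N) (FreeAbelianGroup.lift fun p : M × N => b p.1 p.2) <| by
    refine AddSubgroup.closure_le _ |>.2 ?_
    rintro _ ((⟨m, m', n, rfl⟩ | ⟨m, n, n', rfl⟩) | ⟨r, m, n, rfl⟩) <;>
      simp [add_left, add_right, smul]

@[simp]
theorem lift_tmul (b : M → N → A) (add_left add_right smul) (m : M) (n : N) :
    lift b add_left add_right smul (tmul R M N m n) = b m n :=
  (QuotientAddGroup.lift_mk _ _ _).trans (FreeAbelianGroup.lift_apply_of _ _)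

theorem add_tmul (m m' : M) (n : N) :
    tmul R M N (m + m') n = tmul R M N m n + tmul R M N m' n :=
  QuotientAddGroup.eq_iff_sub_mem.2 <| AddSubgroup.subset_closure <|
    Or.inl <| Or.inl ⟨m, m', n, sub_add_eq_sub_sub _ _ _⟩

theorem tmul_add (m : M) (n n' : N) :
    tmul R M N m (n + n') = tmul R M N m n + tmul R M N m n' :=
  QuotientAddGroup.eq_iff_sub_mem.2 <| AddSubgroup.subset_closure <|
    Or.inl <| Or.inr ⟨m, n, n', sub_add_eq_sub_sub _ _ _⟩

theorem smul_tmul (r : R) (m : M) (n : N) :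
    tmul R M N (op r • m) n = tmul R M N m (r • n) :=
  QuotientAddGroup.eq_iff_sub_mem.2 <| AddSubgroup.subset_closure <| Or.inr ⟨r, m, n, rfl⟩

@[simp]
theorem zero_tmul (n : N) : tmul R M N 0 n = 0 := by
  simpa using add_tmul (0 : M) 0 n

theorem sub_tmul (m m' : M) (n : N) :
    tmul R M N (m - m') n = tmul R M N m n - tmul R M N m' n :=
  eq_sub_of_add_eq <| by rw [← add_tmul, sub_add_cancel]

theorem neg_tmul (m : M) (n : N) : tmul R M N (-m) n = -tmul R M N m n := by
  simpa using sub_tmul 0 m n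

@[elab_as_elim]
theorem induction_on {p : NCTensor R M N → Prop} (z : NCTensor R M N) (zero : p 0)
    (tmul : ∀ m n, p (tmul R M N m n)) (add : ∀ x y, p x → p y → p (x + y)) : p z := by
  obtain ⟨w, rfl⟩ := QuotientAddGroup.mk_surjective z
  induction w using FreeAbelianGroup.induction_on with
  | zero => exact zero
  | of x => exact tmul x.1 x.2
  | neg x _ =>
    have h := tmul (-x.1) x.2
    rwa [neg_tmul] at h
  | add x y hx hy => exact add _ _ hx hy

@[ext]
theorem ext {f g : NCTensor R M N →+ A}
    (h : ∀ m n, f (tmul R M N m n) = g (tmul R M N m n)) : f = g := by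
  ext z
  induction z using induction_on with
  | zero => simp
  | tmul m n => exact h m n
  | add x y hx hy => rw [map_add, map_add, hx, hy]

theorem subsingleton_of_forall_tmul_eq_zero (h : ∀ m n, tmul R M N m n = 0) :
    Subsingleton (NCTensor R M N) :=
  subsingleton_of_forall_eq 0 fun z => by
    induction z using induction_on with
    | zero => rfl
    | tmul m n => exact h m n
    | add x y hx hy => rw [hx, hy, add_zero]

end Basic

section Map

variable {R M M' M'' N N' N'' : Type u} [Ring R]
  [AddCommGroup M] [Module Rᵐᵒᵖ M] [AddCommGroup M'] [Module Rᵐᵒᵖ M']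
  [AddCommGroup M''] [Module Rᵐᵒᵖ M''] [AddCommGroup N] [Module R N]
  [AddCommGroup N'] [Module R N'] [AddCommGroup N''] [Module R N'']

def map (f : M →ₗ[Rᵐᵒᵖ] M') (g : N →ₗ[R] N') : NCTensor R M N →+ NCTensor R M' N' :=
  lift (fun m n => tmul R M' N' (f m) (g n))
    (fun m m' n => by rw [map_add, add_tmul])
    (fun m n n' => by rw [map_add, tmul_add])
    (fun r m n => by rw [map_smul, smul_tmul, map_smul])

@[simp]
theorem map_tmul (f : M →ₗ[Rᵐᵒᵖ] M') (g : N →ₗ[R] N') (m : M) (n : N) :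
    map f g (tmul R M N m n) = tmul R M' N' (f m) (g n) :=
  lift_tmul ..

theorem map_id : map (R := R) (M := M) (N := N) LinearMap.id LinearMap.id = AddMonoidHom.id _ :=
  ext fun _ _ => by simp

theorem map_comp (f₂ : M' →ₗ[Rᵐᵒᵖ] M'') (f₁ : M →ₗ[Rᵐᵒᵖ] M')
    (g₂ : N' →ₗ[R] N'') (g₁ : N →ₗ[R] N') :
    map (f₂ ∘ₗ f₁) (g₂ ∘ₗ g₁) = (map f₂ g₂).comp (map f₁ g₁) :=
  ext fun _ _ => by simp

theorem map_add_left (f₁ f₂ : M →ₗ[Rᵐᵒᵖ] M') (g : N →ₗ[R] N') :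
    map (f₁ + f₂) g = map f₁ g + map f₂ g :=
  ext fun _ _ => by simp [add_tmul]

theorem map_add_right (f : M →ₗ[Rᵐᵒᵖ] M') (g₁ g₂ : N →ₗ[R] N') :
    map f (g₁ + g₂) = map f g₁ + map f g₂ :=
  ext fun _ _ => by simp [tmul_add]

theorem map_comm (f : M →ₗ[Rᵐᵒᵖ] M') (g : N →ₗ[R] N') :
    (map f LinearMap.id).comp (map LinearMap.id g) =
      (map LinearMap.id g).comp (map f LinearMap.id) := by
  rw [← map_comp, ← map_comp]
  rfl

end Map

section Exactness

variable {R M M' N : Type u} [Ring R] [AddCommGroup M] [Module Rᵐᵒᵖ M]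
  [AddCommGroup M'] [Module Rᵐᵒᵖ M'] [AddCommGroup N] [Module R N]

theorem subsingleton_of_surjective [Subsingleton (NCTensor R M N)] {f : M →ₗ[Rᵐᵒᵖ] M'}
    (hf : Function.Surjective f) : Subsingleton (NCTensor R M' N) :=
  subsingleton_of_forall_tmul_eq_zero fun m' n => by
    obtain ⟨m, rfl⟩ := hf m'
    simpa using congrArg (map f LinearMap.id) (Subsingleton.elim (tmul R M N m n) 0)

theorem subsingleton_finsupp [Subsingleton (NCTensor R M N)] (I : Type u) :
    Subsingleton (NCTensor R (I →₀ M) N) :=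
  subsingleton_of_forall_tmul_eq_zero fun x n => by
    induction x using Finsupp.induction_linear with
    | zero => exact zero_tmul n
    | add x y hx hy => rw [add_tmul, hx, hy, add_zero]
    | single i m =>
      have h := congrArg (map (Finsupp.lsingle i) LinearMap.id)
        (Subsingleton.elim (tmul R M N m n) 0)
      rwa [map_tmul, map_zero, Finsupp.lsingle_apply, LinearMap.id_apply] at h

theorem ker_map_le_closure {g : M →ₗ[Rᵐᵒᵖ] M'} (hg : Function.Surjective g) :
    (map (N := N) g LinearMap.id).ker ≤
      AddSubgroup.closure {z | ∃ x ∈ LinearMap.ker g, ∃ n, z = tmul R M N x n} := by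
  set S := AddSubgroup.closure {z | ∃ x ∈ LinearMap.ker g, ∃ n, z = tmul R M N x n}
  have hS : ∀ v w n, g v = g w →
      (tmul R M N v n : NCTensor R M N ⧸ S) = (tmul R M N w n : NCTensor R M N ⧸ S) :=
    fun v w n hvw => QuotientAddGroup.eq_iff_sub_mem.2 <| AddSubgroup.subset_closure
      ⟨v - w, by rw [LinearMap.mem_ker, map_sub, hvw, sub_self], n, (sub_tmul ..).symm⟩
  let σ := Function.surjInv hg
  have hσ : ∀ m', g (σ m') = m' := Function.surjInv_eq hg
  let β : NCTensor R M' N →+ NCTensor R M N ⧸ S :=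
    lift (fun m' n => (tmul R M N (σ m') n : NCTensor R M N ⧸ S))
      (fun m m' n => by
        rw [hS _ (σ m + σ m') n (by rw [map_add, hσ, hσ, hσ]), add_tmul]
        rfl)
      (fun m n n' => by rw [tmul_add]; rfl)
      (fun r m n => by rw [hS _ (op r • σ m) n (by rw [map_smul, hσ, hσ]), smul_tmul])
  have hβ : QuotientAddGroup.mk' S = β.comp (map g LinearMap.id) :=
    ext fun m n => by simpa [β] using (hS _ _ n (hσ (g m))).symm
  intro z hz
  rw [← QuotientAddGroup.eq_zero_iff, ← QuotientAddGroup.mk'_apply, hβ, AddMonoidHom.comp_apply,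
    AddMonoidHom.mem_ker.1 hz, map_zero]

end Exactness

section Bimodule

variable {R M N : Type u} [Ring R] [AddCommGroup M] [Module Rᵐᵒᵖ M]
  [AddCommGroup N] [Module R N]

def rTensorHom : Module.End Rᵐᵒᵖ M →+* AddMonoid.End (NCTensor R M N) :=
  RingHom.mk'
    { toFun := fun f => map f LinearMap.id
      map_one' := map_id
      map_mul' := fun f g => map_comp f g LinearMap.id LinearMap.id }
    fun f g => map_add_left f g _

def lTensorHom : Module.End R N →+* AddMonoid.End (NCTensor R M N) :=
  RingHom.mk'
    { toFun := fun g => map LinearMap.id g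
      map_one' := map_id
      map_mul' := fun f g => map_comp LinearMap.id LinearMap.id f g }
    fun f g => map_add_right _ f g

variable (R M N) (S S' : Type*) [Ring S] [Ring S'] [Module S M] [SMulCommClass S Rᵐᵒᵖ M]
  [Module S' N] [SMulCommClass S' R N]

abbrev moduleLeft : Module S (NCTensor R M N) :=
  Module.compHom (NCTensor R M N)
    ((rTensorHom (N := N)).comp (Module.toModuleEnd Rᵐᵒᵖ (S := S) M))

abbrev moduleRight : Module S' (NCTensor R M N) :=
  Module.compHom (NCTensor R M N)
    ((lTensorHom (M := M)).comp (Module.toModuleEnd R (S := S') N))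

variable {R M N S S'}

theorem smul_tmul_left (s : S) (m : M) (n : N) :
    letI := moduleLeft R M N S
    s • tmul R M N m n = tmul R M N (s • m) n :=
  map_tmul (Module.toModuleEnd Rᵐᵒᵖ M s) LinearMap.id m n

theorem smul_tmul_right (s : S') (m : M) (n : N) :
    letI := moduleRight R M N S'
    s • tmul R M N m n = tmul R M N m (s • n) :=
  map_tmul LinearMap.id (Module.toModuleEnd R N s) m n

theorem smulCommClass :
    letI := moduleLeft R M N S
    letI := moduleRight R M N S'
    SMulCommClass S S' (NCTensor R M N) :=
  letI := moduleLeft R M N S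
  letI := moduleRight R M N S'
  ⟨fun _ _ z => DFunLike.congr_fun (map_comm _ _) z⟩

end Bimodule

end NCTensor

theorem IsRingEpi.commute_of_commute {R Q : Type u} [Ring R] [Ring Q] {φ : R →+* Q}
    (hepi : IsRingEpi φ) {T : Type u} [Ring T] (f : Q →+* T) {u : T} (hu : IsUnit u)
    (h : ∀ r, Commute u (f (φ r))) (a : Q) : Commute u (f a) := by
  obtain ⟨u, rfl⟩ := hu
  let conj := MulSemiringAction.toRingHom (ConjAct Tˣ) T (ConjAct.toConjAct u)
  have hconj : ∀ x, Commute (u : T) x ↔ conj x = x := fun x => by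
    rw [MulSemiringAction.toRingHom_apply, ConjAct.units_smul_def, ConjAct.ofConjAct_toConjAct,
      Units.mul_inv_eq_iff_eq_mul]
    rfl
  have := hepi T (conj.comp f) f (RingHom.ext fun r => (hconj _).1 (h r))
  exact (hconj _).2 (RingHom.congr_fun this a)

namespace NCTensor

open TrivSqZeroExt

variable {R Q : Type u} [Ring R] [Ring Q] {φ : R →+* Q} [Module Rᵐᵒᵖ Q]
  (hr : ∀ (r : R) (q : Q), op r • q = q * φ r)
  [Module R Q] (hl : ∀ (r : R) (q : Q), r • q = φ r * q)

include hr hl in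
theorem tmul_eq_one_tmul_mul (hepi : IsRingEpi φ) (a b : Q) :
    tmul R Q Q a b = tmul R Q Q 1 (a * b) := by
  have : SMulCommClass Q Rᵐᵒᵖ Q :=
    ⟨fun c r q => by rw [← op_unop r, smul_eq_mul, hr, hr, smul_eq_mul, mul_assoc]⟩
  have : SMulCommClass Qᵐᵒᵖ R Q :=
    ⟨fun c r q => by simp only [hl, MulOpposite.smul_eq_mul_unop, mul_assoc]⟩
  let := moduleLeft R Q Q Q
  let := moduleRight R Q Q Qᵐᵒᵖ
  have := smulCommClass (R := R) (M := Q) (N := Q) (S := Q) (S' := Qᵐᵒᵖ)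
  let u : TrivSqZeroExt Q (NCTensor R Q Q) := 1 + inr (tmul R Q Q 1 1)
  have hcomm : ∀ c : Q, Commute u (inl c) ↔ tmul R Q Q c 1 = tmul R Q Q 1 c := fun c => by
    rw [commute_iff_eq, add_mul, mul_add, one_mul, mul_one, inr_mul_inl, inl_mul_inr,
      add_right_inj, inr_injective.eq_iff, smul_tmul_left, smul_tmul_right, smul_eq_mul,
      op_smul_eq_mul, mul_one, one_mul, eq_comm]
  have hu : IsUnit u := isUnit_iff_isUnit_fst.2 (by simp [u])
  have hR : ∀ r, tmul R Q Q (φ r) 1 = tmul R Q Q 1 (φ r) := fun r =>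
    calc tmul R Q Q (φ r) 1 = tmul R Q Q (op r • 1) 1 := by rw [hr, one_mul]
      _ = tmul R Q Q 1 (r • 1) := smul_tmul ..
      _ = tmul R Q Q 1 (φ r) := by rw [hl, mul_one]
  have hQ := (hcomm a).1 (hepi.commute_of_commute (inlHom _ _) hu (fun r => (hcomm _).2 (hR r)) a)
  simpa [smul_tmul_right] using congrArg (op b • ·) hQ

include hr hl in
theorem subsingleton_kmod (hepi : IsRingEpi φ) : Subsingleton (NCTensor R (Kmod φ hr) Q) :=
  subsingleton_of_forall_tmul_eq_zero fun k b => by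
    obtain ⟨a, rfl⟩ := (phiRange φ hr).mkQ_surjective k
    have h1 : (phiRange φ hr).mkQ 1 = 0 := (Submodule.Quotient.mk_eq_zero _).2 ⟨1, map_one φ⟩
    simpa [h1] using
      congrArg (map (phiRange φ hr).mkQ LinearMap.id) (tmul_eq_one_tmul_mul hr hl hepi a b)

end NCTensor

section Action

variable {R Q F : Type u} [Ring R] [Ring Q] {φ : R →+* Q}
  [Module R Q] (hl : ∀ (r : R) (q : Q), r • q = φ r * q)
  [AddCommGroup F] [Module Qᵐᵒᵖ F] [Module Rᵐᵒᵖ F]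
  (hF : ∀ (r : R) (v : F), op r • v = op (φ r) • v)

def NCTensor.actRight : NCTensor R F Q →+ F :=
  NCTensor.lift (fun v q => op q • v)
    (fun _ _ _ => smul_add ..)
    (fun _ _ _ => by rw [op_add, add_smul])
    (fun r v q => by rw [hF, smul_smul, ← op_mul, hl])

@[simp]
theorem NCTensor.actRight_tmul (v : F) (q : Q) :
    NCTensor.actRight hl hF (NCTensor.tmul R F Q v q) = op q • v :=
  NCTensor.lift_tmul ..

end Action

section KmodLift

variable {R Q F M : Type u} [Ring R] [Ring Q] {φ : R →+* Q} [Module Rᵐᵒᵖ Q]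
  (hr : ∀ (r : R) (q : Q), op r • q = q * φ r)
  [AddCommGroup F] [Module Qᵐᵒᵖ F] [Module Rᵐᵒᵖ F]
  (hF : ∀ (r : R) (v : F), op r • v = op (φ r) • v)
  [AddCommGroup M] [Module Rᵐᵒᵖ M]

def orbitMap (x : F) : Q →ₗ[Rᵐᵒᵖ] F where
  toFun q := op q • x
  map_add' _ _ := by rw [op_add, add_smul]
  map_smul' c q := by
    induction c using MulOpposite.rec' with
    | _ r => rw [hr, op_mul, mul_smul, RingHom.id_apply, hF]

@[simp]
theorem orbitMap_apply (x : F) (q : Q) : orbitMap hr hF x q = op q • x :=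
  rfl

def kmodLift (g : F →ₗ[Rᵐᵒᵖ] M) {x : F} (hx : g x = 0) : Kmod φ hr →ₗ[Rᵐᵒᵖ] M :=
  (phiRange φ hr).liftQ (g ∘ₗ orbitMap hr hF x) <| by
    rintro _ ⟨r, rfl⟩
    rw [LinearMap.mem_ker, LinearMap.comp_apply, orbitMap_apply, ← hF, map_smul, hx, smul_zero]

@[simp]
theorem kmodLift_mk (g : F →ₗ[Rᵐᵒᵖ] M) {x : F} (hx : g x = 0) (q : Q) :
    kmodLift hr hF g hx (Submodule.Quotient.mk q) = g (op q • x) :=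
  rfl

variable [Module R Q] (hl : ∀ (r : R) (q : Q), r • q = φ r * q)

include hl hF in
theorem surjective_lsum_kmod_of_subsingleton [Subsingleton (NCTensor R M Q)]
    {g : F →ₗ[Rᵐᵒᵖ] M} (hg : Function.Surjective g) :
    Function.Surjective (Finsupp.lsum ℕ fun f : Kmod φ hr →ₗ[Rᵐᵒᵖ] M => f) := by
  set T := LinearMap.range (Finsupp.lsum ℕ fun f : Kmod φ hr →ₗ[Rᵐᵒᵖ] M => f)
  have hgen : AddSubgroup.closure {z | ∃ x ∈ LinearMap.ker g, ∃ q, z = NCTensor.tmul R F Q x q} ≤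
      T.toAddSubgroup.comap (g.toAddMonoidHom.comp (NCTensor.actRight hl hF)) := by
    refine (AddSubgroup.closure_le _).2 ?_
    rintro _ ⟨x, hx, q, rfl⟩
    exact ⟨Finsupp.single (kmodLift hr hF g hx) (Submodule.Quotient.mk q),
      by simpa using kmodLift_mk ..⟩
  intro m
  obtain ⟨v, rfl⟩ := hg m
  have h0 : NCTensor.map g LinearMap.id (NCTensor.tmul R F Q v 1) = 0 := Subsingleton.elim _ _
  exact (by simpa using hgen (NCTensor.ker_map_le_closure hg h0) : g v ∈ T)

end KmodLift

theorem torsion_hdivisible_iff_genK_general {R Q : Type u} [Ring R] [Ring Q] (φ : R →+* Q)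
    (hepi : IsRingEpi φ)
    [Module Rᵐᵒᵖ Q] (hr : ∀ (r : R) (q : Q), op r • q = q * φ r)
    [Module R Q] (hl : ∀ (r : R) (q : Q), r • q = φ r * q)
    (M : Type u) [AddCommGroup M] [Module Rᵐᵒᵖ M] :
    (Subsingleton (NCTensor R M Q) ∧
      ∃ (I : Type u) (h : (I →₀ Q) →ₗ[Rᵐᵒᵖ] M), Function.Surjective h) ↔
    ∃ (I : Type u) (h : (I →₀ Kmod φ hr) →ₗ[Rᵐᵒᵖ] M), Function.Surjective h := by
  constructor
  · rintro ⟨_, I, g, hg⟩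
    have hF : ∀ (r : R) (v : I →₀ Q), op r • v = op (φ r) • v := fun r v =>
      Finsupp.ext fun i => by rw [Finsupp.smul_apply, Finsupp.smul_apply, hr, op_smul_eq_mul]
    exact ⟨_, _, surjective_lsum_kmod_of_subsingleton hr hF hl hg⟩
  · rintro ⟨I, h, hh⟩
    have := NCTensor.subsingleton_kmod hr hl hepi
    have := NCTensor.subsingleton_finsupp (R := R) (M := Kmod φ hr) (N := Q) I
    refine ⟨NCTensor.subsingleton_of_surjective hh, I,
      h ∘ₗ Finsupp.mapRange.linearMap (phiRange φ hr).mkQ, hh.comp ?_⟩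
    exact Finsupp.mapRange_surjective _ (map_zero _) (Submodule.mkQ_surjective _)

/-- If `φ : R → Q` is an injective ring epimorphism with `Q` flat as a left `R`-module and
`K = Q/φ(R)`, then a right `R`-module `M` is torsion (`M ⊗_R Q = 0`) and h-divisible
(a quotient of a direct sum of copies of `Q`) iff `M` is generated by `K`
(a quotient of a direct sum of copies of `K`). -/
theorem torsion_hdivisible_iff_genK {R Q : Type u} [Ring R] [Ring Q] (φ : R →+* Q)
    (hinj : Function.Injective φ) (hepi : IsRingEpi φ)
    [Module Rᵐᵒᵖ Q] (hr : ∀ (r : R) (q : Q), op r • q = q * φ r)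
    [Module R Q] (hl : ∀ (r : R) (q : Q), r • q = φ r * q)
    (hflat : IsFlatLeftModule R Q)
    (M : Type u) [AddCommGroup M] [Module Rᵐᵒᵖ M] :
    (Subsingleton (NCTensor R M Q) ∧
      ∃ (I : Type u) (h : (I →₀ Q) →ₗ[Rᵐᵒᵖ] M), Function.Surjective h) ↔
    ∃ (I : Type u) (h : (I →₀ Kmod φ hr) →ₗ[Rᵐᵒᵖ] M), Function.Surjective h :=
  torsion_hdivisible_iff_genK_general φ hepi hr hl M
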